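/- arXiv:1702.03450 — 2 statements merged into one kernel-verified Lean document; each statement's English description precedes it below -/
import Mathlib

section
/- Tightness is preserved under reset of a non-reference clock: if M is tight and ℓ ≠ n, then M[x_ℓ ← 0], defined by (M[x_ℓ ← 0])_{i,j} = M_{i_ℓ, j_ℓ} with k_ℓ = k for k ≠ ℓ and ℓ_ℓ = 0, is tight. -/
open scoped Classical

/-- The set `V = ({<,≤} × ℝ) ∪ {(<,∞)}` of DBM entries: a strictness flag
(`true` means strict `<`, `false` means non-strict `≤`) together with a bound in
`ℝ ∪ {∞}`, where an infinite bound must be strict. -/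
abbrev V : Type := {v : Bool × WithTop ℝ // v.2 = ⊤ → v.1 = true}

namespace V

def strict (v : V) : Bool := v.1.1
def bound (v : V) : WithTop ℝ := v.1.2

/-- The order `≤_V`: `(≺,m) ≤_V (≺',m')` iff `m < m'`, or `m = m'` and
(`≺` is `<` or `≺'` is `≤`). -/
def le (a b : V) : Prop :=
  a.bound < b.bound ∨ (a.bound = b.bound ∧ (a.strict = true ∨ b.strict = false))

/-- Addition on `V`: bounds add (with `m + ∞ = ∞`), and the resulting flag is
non-strict iff both flags are non-strict. -/
noncomputable def add (a b : V) : V :=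
  ⟨(a.strict || b.strict, a.bound + b.bound), by
    intro h
    rcases WithTop.add_eq_top.mp h with h' | h'
    · simp [strict, a.2 h']
    · simp [strict, b.2 h']⟩

/-- Minimum with respect to `≤_V`. -/
noncomputable def min (a b : V) : V := if le a b then a else b

/-- The trivial entry `(<,∞)`. -/
def inf : V := ⟨(true, ⊤), fun _ => rfl⟩

/-- The non-strict entry `(≤, r)` for a real bound `r`. -/
def nonstrict (r : ℝ) : V := ⟨(false, (r : WithTop ℝ)), by simp⟩

end V

/-- A DBM over clocks `x_0, …, x_n` is an `(n+1) × (n+1)` matrix with entries in `V`. -/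
def DBM (n : ℕ) : Type := Fin (n+1) → Fin (n+1) → V

/-- Canonical form: `M_{i,k} ≤_V M_{i,j} + M_{j,k}` for all `i,j,k`. -/
def Canonical {n : ℕ} (M : DBM n) : Prop :=
  ∀ i j k, (M i k).le ((M i j).add (M j k))

/-- Satisfaction of a single difference constraint by a real number. -/
def Vsat (v : V) (x : ℝ) : Prop :=
  if v.strict = true then (x : WithTop ℝ) < v.bound else (x : WithTop ℝ) ≤ v.bound

/-- The zone `⟦M⟧`: nonnegative valuations `ν` with `ν 0 = 0` satisfying
`ν i − ν j ≺_{i,j} m_{i,j}` for all `i, j`. -/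
def zone {n : ℕ} (M : DBM n) : Set (Fin (n+1) → ℝ) :=
  {ν | ν 0 = 0 ∧ (∀ i, 0 ≤ ν i) ∧ ∀ i j, Vsat (M i j) (ν i - ν j)}

/-- An atomic DBM: all entries are `(<,∞)` except possibly the entry at `(p,q)`. -/
def Atomic {n : ℕ} (M : DBM n) (p q : Fin (n+1)) : Prop :=
  ∀ i j, ¬(i = p ∧ j = q) → M i j = V.inf

/-- Canonical intersection of `M` with the atomic DBM whose non-trivial entry is
`v` at position `(p,q)`: `M''_{i,j} = min(M_{i,j}, M_{i,p} + v + M_{q,j})`. -/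
noncomputable def interAt {n : ℕ} (M : DBM n) (p q : Fin (n+1)) (v : V) : DBM n :=
  fun i j => (M i j).min (((M i p).add v).add (M q j))

/-- Time elapse: entries `M_{i,0}` for `i ≠ 0` become `(<,∞)`. -/
def elapse {n : ℕ} (M : DBM n) : DBM n :=
  fun i j => if i ≠ 0 ∧ j = 0 then V.inf else M i j

/-- Reset of clock `x_ℓ`: substitute index `0` for index `ℓ`. -/
def reset {n : ℕ} (M : DBM n) (l : Fin (n+1)) : DBM n :=
  fun i j => M (if i = l then 0 else i) (if j = l then 0 else j)

/-- The numeric bound of `v` is neither an integer nor `∞`. -/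
def NotIntEntry (v : V) : Prop :=
  v.bound ≠ ⊤ ∧ ∀ z : ℤ, v.bound ≠ ((z : ℝ) : WithTop ℝ)

/-- Tightness: `M_{i,j} = M_{i,n} + M_{n,j}` whenever `m_{i,j} ∉ ℤ ∪ {∞}`. -/
def Tight {n : ℕ} (M : DBM n) : Prop :=
  ∀ i j, NotIntEntry (M i j) → M i j = (M i (Fin.last n)).add ((M (Fin.last n) j))

theorem Tight.reindex {n : ℕ} {M : DBM n} (hM : Tight M) {σ : Fin (n+1) → Fin (n+1)}
    (hσ : σ (Fin.last n) = Fin.last n) : Tight (fun i j => M (σ i) (σ j) : DBM n) := by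
  intro i j hij
  simpa only [hσ] using hM (σ i) (σ j) hij

/-- tightness is preserved under reset of a non-reference clock
`x_ℓ`, `ℓ ≠ n`. -/
theorem stmt12 {n : ℕ} (M : DBM n) (l : Fin (n+1)) (hl : l ≠ Fin.last n)
    (h : Tight M) : Tight (reset M l) :=
  h.reindex (σ := fun k => if k = l then 0 else k) (if_neg hl.symm)
end

section
/- Region invariance fails for real-valued parametric TCTL: for the timed automaton 𝓐 with locations ℓ_0,…,ℓ_4, edges ℓ_0 →(0<x_1<1, reset x_1) ℓ_1, ℓ_1 →(x_1=0) ℓ_2, ℓ_2 →(x_2=1) ℓ_3, ℓ_3 →(x_2=1, reset x_1) ℓ_4, ℓ_4 →(reset x_1) ℓ_4, and labelling LB(ℓ_1)={p_1}, LB(ℓ_3)={p_2}, the configuration (ℓ_0, 0⃗) satisfies ∃F(p_1 ∧ ∃F_{=θ} p_2) for every real 0 < θ < 1, but for no natural number θ ∈ ℕ. -/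
/-!
The clock `x_2` is never reset, and `ℓ_3` can only be left when `x_2 = 1`; since a non-zeno run
must keep taking discrete transitions, it is in `ℓ_3` only with `x_2 = 1`. A configuration in
`ℓ_1` reached from `(ℓ_0, 0⃗)` has `0 ≤ x_1` and `0 < x_2 - x_1 < 1`, because `x_1` was reset when
`x_1 = x_2 ∈ (0, 1)`; and `ℓ_1` can only be left with `x_1 = 0`, hence without delay. So from
there `ℓ_3` is reached after total delay exactly `1 - x_2 ∈ (0, 1)`; conversely, each
`θ ∈ (0, 1)` is obtained by waiting `1 - θ` in `ℓ_0`.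
-/

/-- Configurations of the timed automaton of Figure 3: a location `ℓ_0,…,ℓ_4`
together with the values of the two clocks `x_1, x_2`. -/
abbrev Config : Type := Fin 5 × ℝ × ℝ

/-- The discrete transitions of the timed automaton:
`ℓ_0 →(0<x_1<1, x_1←0) ℓ_1`, `ℓ_1 →(x_1=0) ℓ_2`, `ℓ_2 →(x_2=1) ℓ_3`,
`ℓ_3 →(x_2=1, x_1←0) ℓ_4`, `ℓ_4 →(x_1←0) ℓ_4`. -/
inductive Discrete : Config → Config → Prop
  | e01 (v1 v2 : ℝ) : 0 < v1 → v1 < 1 → Discrete (0, v1, v2) (1, 0, v2)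
  | e12 (v1 v2 : ℝ) : v1 = 0 → Discrete (1, v1, v2) (2, v1, v2)
  | e23 (v1 v2 : ℝ) : v2 = 1 → Discrete (2, v1, v2) (3, v1, v2)
  | e34 (v1 v2 : ℝ) : v2 = 1 → Discrete (3, v1, v2) (4, 0, v2)
  | e44 (v1 v2 : ℝ) : Discrete (4, v1, v2) (4, 0, v2)

/-- An infinite run: at each step either a delay transition of duration `d i ≥ 0`
or a discrete transition (of duration `0`). -/
def IsRun (ρ : ℕ → Config) (d : ℕ → ℝ) : Prop :=
  ∀ i, (0 ≤ d i ∧ ρ (i + 1) = ((ρ i).1, (ρ i).2.1 + d i, (ρ i).2.2 + d i)) ∨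
    (d i = 0 ∧ Discrete (ρ i) (ρ (i + 1)))

/-- Non-zenoness: the cumulative delay diverges and there are infinitely many
discrete transitions. -/
def NonZeno (ρ : ℕ → Config) (d : ℕ → ℝ) : Prop :=
  (∀ B : ℝ, ∃ N : ℕ, B ≤ ∑ i ∈ Finset.range N, d i) ∧
  (∀ N : ℕ, ∃ i : ℕ, N ≤ i ∧ Discrete (ρ i) (ρ (i + 1)))

/-- `q ⊨ ∃F_{=θ} p_2`: some infinite non-zeno run from `q` is, after cumulative
delay exactly `θ`, in location `ℓ_3` (the location labelled `p_2`). -/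
def SatEFeq (θ : ℝ) (q : Config) : Prop :=
  ∃ ρ d, IsRun ρ d ∧ NonZeno ρ d ∧ ρ 0 = q ∧
    ∃ j : ℕ, (∑ i ∈ Finset.range j, d i) = θ ∧ (ρ j).1 = 3

/-- `(ℓ_0, 0⃗) ⊨ ∃F (p_1 ∧ ∃F_{=θ} p_2)`: some infinite non-zeno run from the
initial configuration reaches a configuration in location `ℓ_1` (labelled `p_1`)
which satisfies `∃F_{=θ} p_2`. -/
def SatFormula (θ : ℝ) : Prop :=
  ∃ ρ d, IsRun ρ d ∧ NonZeno ρ d ∧ ρ 0 = ((0 : Fin 5), (0 : ℝ), (0 : ℝ)) ∧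
    ∃ i : ℕ, (ρ i).1 = 1 ∧ SatEFeq θ (ρ i)

open Finset

def seqCons {α : Type*} (a : α) (f : ℕ → α) : ℕ → α
  | 0 => a
  | n + 1 => f n

@[simp]
theorem seqCons_zero {α : Type*} (a : α) (f : ℕ → α) : seqCons a f 0 = a := rfl

def Step (q : Config) (δ : ℝ) (q' : Config) : Prop :=
  (0 ≤ δ ∧ q' = (q.1, q.2.1 + δ, q.2.2 + δ)) ∨ (δ = 0 ∧ Discrete q q')

def IsStepInvariant (P : Config → Prop) : Prop :=
  (∀ q δ, 0 ≤ δ → P q → P (q.1, q.2.1 + δ, q.2.2 + δ)) ∧ ∀ q q', Discrete q q' → P q → P q'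

section Runs

variable {ρ : ℕ → Config} {d : ℕ → ℝ}

theorem Discrete.snd_snd_eq {q q' : Config} (h : Discrete q q') : q'.2.2 = q.2.2 := by
  cases h <;> rfl

theorem IsRun.snd_snd_eq_add_sum (h : IsRun ρ d) (k : ℕ) :
    (ρ k).2.2 = (ρ 0).2.2 + ∑ i ∈ range k, d i := by
  induction k with
  | zero => simp
  | succ k ih =>
    rw [sum_range_succ]
    rcases h k with ⟨-, hk⟩ | ⟨hd, hk⟩
    · rw [hk, ih, add_assoc]
    · rw [hk.snd_snd_eq, ih, hd, add_zero]

theorem IsStepInvariant.apply_of_le {P : Config → Prop} (hP : IsStepInvariant P)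
    (h : IsRun ρ d) {j k : ℕ} (hj : P (ρ j)) (hjk : j ≤ k) : P (ρ k) := by
  induction k, hjk using Nat.le_induction with
  | base => exact hj
  | succ k _ ih =>
    rcases h k with ⟨hd, hk⟩ | ⟨-, hk⟩
    · exact hk ▸ hP.1 _ _ hd ih
    · exact hP.2 _ _ hk ih

theorem IsRun.cons (h : IsRun ρ d) {q : Config} {δ : ℝ} (hq : Step q δ (ρ 0)) :
    IsRun (seqCons q ρ) (seqCons δ d)
  | 0 => hq
  | i + 1 => h i

theorem NonZeno.cons (h : NonZeno ρ d) (q : Config) (δ : ℝ) :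
    NonZeno (seqCons q ρ) (seqCons δ d) := by
  refine ⟨fun B => ?_, fun N => ?_⟩
  · obtain ⟨N, hN⟩ := h.1 (B - δ)
    refine ⟨N + 1, ?_⟩
    rw [sum_range_succ']
    exact sub_le_iff_le_add.mp hN
  · obtain ⟨i, hi, hdisc⟩ := h.2 N
    exact ⟨i + 1, by omega, hdisc⟩

end Runs

theorem Discrete.snd_snd_eq_one_of_fst_eq_three {q q' : Config} (h : Discrete q q')
    (hq : q.1 = 3) : q.2.2 = 1 := by
  cases h <;> simp_all

theorem NonZeno.snd_snd_le_one_of_fst_eq_three {ρ : ℕ → Config} {d : ℕ → ℝ} (h : IsRun ρ d)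
    (hnz : NonZeno ρ d) {j : ℕ} (hj : (ρ j).1 = 3) : (ρ j).2.2 ≤ 1 := by
  by_contra! hlt
  have hP : IsStepInvariant fun q => q.1 = 3 ∧ 1 < q.2.2 :=
    ⟨fun q δ hδ ⟨h3, h1⟩ => ⟨h3, by dsimp only; linarith⟩,
      fun q _ hq ⟨h3, h1⟩ => absurd (hq.snd_snd_eq_one_of_fst_eq_three h3) h1.ne'⟩
  obtain ⟨i, hji, hi⟩ := hnz.2 j
  obtain ⟨h3, h1⟩ := hP.apply_of_le h ⟨hj, hlt⟩ hji
  exact h1.ne' (hi.snd_snd_eq_one_of_fst_eq_three h3)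

theorem isStepInvariant_from_loc1 (a : ℝ) :
    IsStepInvariant fun q => q.1 ≠ 0 ∧ (q.1 = 1 → a ≤ q.2.1) ∧ (q.1 = 2 → a ≤ 0) ∧
      (q.1 = 3 → a ≤ 0 ∧ 1 ≤ q.2.2) := by
  refine ⟨fun q δ hδ ⟨h0, h1, h2, h3⟩ => ⟨h0, fun hq => ?_, h2, fun hq => ?_⟩, ?_⟩
  · have := h1 hq; dsimp only; linarith
  · obtain ⟨h, h'⟩ := h3 hq; exact ⟨h, by dsimp only; linarith⟩
  · rintro _ _ (⟨v1, v2, -, -⟩ | ⟨v1, v2, rfl⟩ | ⟨v1, v2, rfl⟩ | ⟨v1, v2, rfl⟩ | ⟨v1, v2⟩)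
      ⟨h0, h1, h2, h3⟩ <;> simp_all

theorem isStepInvariant_from_init :
    IsStepInvariant fun q => (q.1 = 0 → q.2.1 = q.2.2 ∧ 0 ≤ q.2.1) ∧
      (q.1 = 1 → 0 ≤ q.2.1 ∧ 0 < q.2.2 - q.2.1 ∧ q.2.2 - q.2.1 < 1) := by
  refine ⟨fun q δ hδ ⟨h0, h1⟩ => ⟨fun hq => ?_, fun hq => ?_⟩, ?_⟩
  · obtain ⟨h, h'⟩ := h0 hq; exact ⟨by dsimp only; rw [h], by dsimp only; linarith⟩
  · obtain ⟨h, h', h''⟩ := h1 hq; dsimp only; exact ⟨by linarith, by linarith, by linarith⟩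
  · rintro _ _ (⟨v1, v2, hv0, hv1⟩ | ⟨v1, v2, rfl⟩ | ⟨v1, v2, rfl⟩ | ⟨v1, v2, rfl⟩ | ⟨v1, v2⟩)
      ⟨h0, h1⟩ <;> simp_all

theorem SatEFeq.eq_one_sub {θ a b : ℝ} (ha : 0 ≤ a) (h : SatEFeq θ (1, a, b)) :
    a = 0 ∧ θ = 1 - b := by
  obtain ⟨σ, e, hσ, hnz, hσ0, j, hsum, hj⟩ := h
  have hinv := (isStepInvariant_from_loc1 a).apply_of_le hσ (j := 0)
    (by rw [hσ0]; simp) (Nat.zero_le j)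
  obtain ⟨ha0, hge⟩ := hinv.2.2.2 hj
  have hle := hnz.snd_snd_le_one_of_fst_eq_three hσ hj
  have hclock := hσ.snd_snd_eq_add_sum j
  rw [hσ0, hsum] at hclock
  exact ⟨le_antisymm ha0 ha, by dsimp only at hclock; linarith⟩

theorem SatFormula.pos_and_lt_one {θ : ℝ} (h : SatFormula θ) : 0 < θ ∧ θ < 1 := by
  obtain ⟨ρ, d, hρ, -, hρ0, i, hi, hsat⟩ := h
  obtain ⟨ha, hba, hb⟩ := (isStepInvariant_from_init.apply_of_le hρ (j := 0)
    (by rw [hρ0]; simp) (Nat.zero_le i)).2 hi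
  rw [show ρ i = (1, (ρ i).2.1, (ρ i).2.2) from Prod.ext hi rfl] at hsat
  obtain ⟨ha0, rfl⟩ := hsat.eq_one_sub ha
  rw [ha0] at hba hb
  constructor <;> linarith

def loopRun (c : ℝ) : ℕ → Config
  | 0 => (4, 0, c)
  | 1 => (4, 1, c + 1)
  | n + 2 => loopRun (c + 1) n

def loopDelay : ℕ → ℝ
  | 0 => 1
  | 1 => 0
  | n + 2 => loopDelay n

theorem isRun_loopRun : ∀ c, IsRun (loopRun c) loopDelay
  | c, 0 => Or.inl ⟨zero_le_one, by simp [loopRun, loopDelay]⟩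
  | _, 1 => Or.inr ⟨rfl, Discrete.e44 _ _⟩
  | c, n + 2 => isRun_loopRun (c + 1) n

theorem discrete_loopRun :
    ∀ (c : ℝ) (n : ℕ), Discrete (loopRun c (2 * n + 1)) (loopRun c (2 * n + 2))
  | _, 0 => Discrete.e44 _ _
  | c, n + 1 => discrete_loopRun (c + 1) n

theorem sum_range_loopDelay (n : ℕ) : ∑ i ∈ range (2 * n), loopDelay i = n := by
  induction n with
  | zero => simp
  | succ n ih =>
    rw [mul_add, mul_one, sum_range_succ', sum_range_succ']
    simp [loopDelay, ih]

theorem nonZeno_loopRun (c : ℝ) : NonZeno (loopRun c) loopDelay := by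
  refine ⟨fun B => ⟨2 * ⌈B⌉₊, ?_⟩, fun N => ⟨2 * N + 1, by omega, discrete_loopRun c N⟩⟩
  rw [sum_range_loopDelay]
  exact Nat.le_ceil B

def runFromLoc1 (b : ℝ) : ℕ → Config :=
  seqCons (1, 0, b) <| seqCons (2, 0, b) <| seqCons (2, 1 - b, 1) <| seqCons (3, 1 - b, 1) <|
    loopRun 1

def delayFromLoc1 (b : ℝ) : ℕ → ℝ :=
  seqCons 0 <| seqCons (1 - b) <| seqCons 0 <| seqCons 0 loopDelay

theorem isRun_runFromLoc1 {b : ℝ} (hb : b ≤ 1) : IsRun (runFromLoc1 b) (delayFromLoc1 b) :=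
  ((((isRun_loopRun 1).cons (Or.inr ⟨rfl, Discrete.e34 _ _ rfl⟩)).cons
    (Or.inr ⟨rfl, Discrete.e23 _ _ rfl⟩)).cons (Or.inl ⟨sub_nonneg.2 hb, by simp⟩)).cons
    (Or.inr ⟨rfl, Discrete.e12 _ _ rfl⟩)

theorem nonZeno_runFromLoc1 (b : ℝ) : NonZeno (runFromLoc1 b) (delayFromLoc1 b) :=
  ((((nonZeno_loopRun 1).cons _ _).cons _ _).cons _ _).cons _ _

theorem satEFeq_one_sub {b : ℝ} (hb : b ≤ 1) : SatEFeq (1 - b) (1, 0, b) :=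
  ⟨runFromLoc1 b, delayFromLoc1 b, isRun_runFromLoc1 hb, nonZeno_runFromLoc1 b, rfl, 3,
    by simp [sum_range_succ, delayFromLoc1, seqCons], rfl⟩

theorem satFormula_one_sub {t : ℝ} (ht0 : 0 < t) (ht1 : t < 1) : SatFormula (1 - t) := by
  refine ⟨seqCons (0, 0, 0) <| seqCons (0, t, t) <| runFromLoc1 t,
    seqCons t <| seqCons 0 <| delayFromLoc1 t, ?_, ?_, rfl, 2, rfl, satEFeq_one_sub ht1.le⟩
  · exact ((isRun_runFromLoc1 ht1.le).cons (Or.inr ⟨rfl, Discrete.e01 _ _ ht0 ht1⟩)).cons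
      (Or.inl ⟨ht0.le, by simp⟩)
  · exact ((nonZeno_runFromLoc1 t).cons _ _).cons _ _

theorem satFormula_iff (θ : ℝ) : SatFormula θ ↔ 0 < θ ∧ θ < 1 := by
  refine ⟨SatFormula.pos_and_lt_one, fun ⟨h0, h1⟩ => ?_⟩
  simpa using satFormula_one_sub (t := 1 - θ) (by linarith) (by linarith)

/-- region invariance fails for real-valued parameters.
The configuration `(ℓ_0, 0⃗)` satisfies `∃F(p_1 ∧ ∃F_{=θ} p_2)` for every real
`0 < θ < 1`, but for no natural number value of `θ`. -/
theorem stmt19 :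
    (∀ θ : ℝ, 0 < θ → θ < 1 → SatFormula θ) ∧
    (∀ m : ℕ, ¬ SatFormula (m : ℝ)) := by
  refine ⟨fun θ h0 h1 => (satFormula_iff θ).2 ⟨h0, h1⟩, fun m hm => ?_⟩
  obtain ⟨h0, h1⟩ := (satFormula_iff m).1 hm
  have := Nat.cast_pos.1 h0
  have := Nat.cast_lt_one.1 h1
  omega
end
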